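/- Let N be an odd squarefree positive integer, let ℓ be a divisor of N with ℓ > 1, let m be a divisor of N, and set ε := (−1)^((ℓ−1)/2). Let n > 0 be an integer such that −εn = D_{ℓ,n}·f_n² with D_{ℓ,n} a fundamental discriminant and f_n ≥ 1. Then Σ_{d | f_n, gcd(d,N)=1} μ(d)·(d/ℓ)·(D_{ℓ,n}/d)·σ_{m,N,1}(f_n/d) = (∏_{p prime, p | N/m} f_p) · (∏_{p prime, p | f_n, p ∤ N} D_p(ℓ,n)), where D_p(ℓ,n) := σ₁(f_p) − σ₁(f_p/p)·(D_{ℓ,n}/p)·(p/ℓ) with σ₁(f_p/p) := 0 if p ∤ f_p. -/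

import Mathlib

open scoped BigOperators

/-- The Kronecker symbol `(D/p)` at a prime `p`. -/
def kronP (D : ℤ) (p : ℕ) : ℤ :=
  if p = 2 then
    if D % 2 = 0 then 0 else if D % 8 = 1 ∨ D % 8 = 7 then 1 else -1
  else jacobiSym D p

/-- The Kronecker symbol `(D/m)` for positive `m`: the completely multiplicative
function of `m` determined by its values at primes. -/
def kron (D : ℤ) (m : ℕ) : ℤ :=
  m.factorization.prod fun p k => kronP D p ^ k

/-- Fundamental discriminant: `1`, or squarefree `≡ 1 (mod 4)`, or `4k` with
`k ≡ 2, 3 (mod 4)` squarefree. -/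
def IsFundDisc (D : ℤ) : Prop :=
  D = 1 ∨ (D % 4 = 1 ∧ Squarefree D) ∨
    ∃ k : ℤ, D = 4 * k ∧ (k % 4 = 2 ∨ k % 4 = 3) ∧ Squarefree k

/-- The decomposition `a = D·f²` with `D` a fundamental discriminant, `f ≥ 1`. -/
noncomputable def fdpair (a : ℤ) : ℤ × ℕ := by
  classical
  exact if h : ∃ p : ℤ × ℕ, IsFundDisc p.1 ∧ 1 ≤ p.2 ∧ a = p.1 * (p.2 : ℤ) ^ 2
    then h.choose else (0, 0)

/-- `D_n`, the fundamental discriminant with `-n = D_n · f_n²`. -/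
noncomputable def Dn (n : ℕ) : ℤ := (fdpair (-(n : ℤ))).1

/-- `f_n`, the conductor with `-n = D_n · f_n²`. -/
noncomputable def fn (n : ℕ) : ℕ := (fdpair (-(n : ℤ))).2

/-- `f_p := p^(v_p f)`, the `p`-part of `f`. -/
def ppart (f p : ℕ) : ℕ := p ^ f.factorization p

/-- The weight `w(a,b,c)` in the definition of the Hurwitz class number. -/
def hurwitzW (a b c : ℤ) : ℚ :=
  if a = b ∧ b = c then 3 else if b = 0 ∧ a = c then 2 else 1

/-- The Hurwitz class number `H(n)`: `H(0) = -1/12`, and for `n > 0` the weighted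
count of reduced forms of discriminant `-n` (automatically `0` for `n ≡ 1, 2 mod 4`). -/
noncomputable def hurwitz (n : ℕ) : ℚ :=
  if n = 0 then -(1 / 12)
  else
    ∑ a ∈ Finset.Icc (1 : ℤ) (n : ℤ), ∑ b ∈ Finset.Icc (-(n : ℤ)) (n : ℤ),
      ∑ c ∈ Finset.Icc (1 : ℤ) ((n : ℤ) ^ 2 + (n : ℤ)),
        if b ^ 2 - 4 * a * c = -(n : ℤ) ∧ |b| ≤ a ∧ a ≤ c ∧ ((|b| = a ∨ a = c) → 0 ≤ b)
        then (hurwitzW a b c)⁻¹ else 0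

/-- `L(0, χ_D) = -(1/|D|) Σ_{a=1}^{|D|} (D/a) a` for a fundamental discriminant `D < 0`. -/
noncomputable def Lval (D : ℤ) : ℚ :=
  -(1 / (D.natAbs : ℚ)) * ∑ a ∈ Finset.Icc 1 D.natAbs, (kron D a : ℚ) * (a : ℚ)

/-- `L_m(0, χ_D) = L(0,χ_D) ∏_{p ∣ m} (1 - (D/p))`. -/
noncomputable def LvalM (m : ℕ) (D : ℤ) : ℚ :=
  Lval D * ∏ p ∈ m.primeFactors, (1 - (kron D p : ℚ))

/-- `σ_{m,N,1}(r) = Σ_{d ∣ r, gcd(d,m)=1, gcd(r/d, N/m)=1} d`. -/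
def sigmaMN (m N r : ℕ) : ℕ :=
  ∑ d ∈ r.divisors, if Nat.gcd d m = 1 ∧ Nat.gcd (r / d) (N / m) = 1 then d else 0

/-- The Pei–Wang generalized Hurwitz class number `H_{m,N}(n)`. -/
noncomputable def HPW (m N n : ℕ) : ℚ :=
  if n = 0 then
    if m = N then -(1 / 12) * ∏ p ∈ N.primeFactors, (1 - (p : ℚ)) else 0
  else if n % 4 = 0 ∨ n % 4 = 3 then
    LvalM m (Dn n) *
      (∏ p ∈ (N / m).primeFactors,
        (1 - (kron (Dn n) p : ℚ) / (p : ℚ)) / (1 - ((p : ℚ)⁻¹) ^ 2)) *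
      ∑ a ∈ (fn n).divisors,
        if Nat.gcd a N = 1 then
          (ArithmeticFunction.moebius a : ℚ) * (kron (Dn n) a : ℚ) *
            (sigmaMN m N (fn n / a) : ℚ)
        else 0
  else 0

/-- The Li–Skoruppa–Zhou modified class number `H^{(N₁,N₂)}(n)`. -/
noncomputable def HLSZ (N₁ N₂ n : ℕ) : ℚ :=
  if n = 0 then
    -(1 / 12) * (∏ p ∈ N₁.primeFactors, (1 - (p : ℚ))) *
      ∏ p ∈ N₂.primeFactors, ((p : ℚ) + 1)
  else if n % 4 = 0 ∨ n % 4 = 3 then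
    hurwitz (n / (∏ p ∈ (N₁ * N₂).primeFactors, ppart (fn n) p) ^ 2) *
      (∏ p ∈ N₁.primeFactors, (1 - (kron (Dn n) p : ℚ))) *
      ∏ p ∈ N₂.primeFactors,
        ((2 * (p : ℚ) * (ppart (fn n) p : ℚ) - (p : ℚ) - 1 -
            (kron (Dn n) p : ℚ) * (2 * (ppart (fn n) p : ℚ) - (p : ℚ) - 1)) /
          ((p : ℚ) - 1))
  else 0

/-- Number of distinct prime divisors, `ω(N)`. -/
def omegaN (N : ℕ) : ℕ := N.primeFactors.card

/-- The local factor `A_p(n)`, for `-n = D·f²`. -/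
noncomputable def locA (D : ℤ) (f p : ℕ) : ℚ :=
  (ppart f p : ℚ) * (1 - (kron D p : ℚ) / (p : ℚ)) / (1 - ((p : ℚ)⁻¹) ^ 2)

/-- The local factor `B_p(n)`, for `-n = D·f²`. -/
noncomputable def locB (D : ℤ) (f p : ℕ) : ℚ :=
  (2 * (p : ℚ) * (ppart f p : ℚ) - (p : ℚ) - 1 -
      (kron D p : ℚ) * (2 * (ppart f p : ℚ) - (p : ℚ) - 1)) / ((p : ℚ) - 1)

/-- The local factor `C_p(n)`, for `-n = D·f²`. -/
noncomputable def locC (D : ℤ) (p : ℕ) : ℚ := 1 - (kron D p : ℚ)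

/-- The local factor `D_p(n) = σ₁(f_p) - σ₁(f_p/p)·(D/p)`, for `-n = D·f²`. -/
noncomputable def locD (D : ℤ) (f p : ℕ) : ℚ :=
  (ArithmeticFunction.sigma 1 (ppart f p) : ℚ) -
    (ArithmeticFunction.sigma 1 (ppart f p / p) : ℚ) * (kron D p : ℚ)

/-- The character local factor `D_p(ℓ,n) = σ₁(f_p) - σ₁(f_p/p)·(D_{ℓ,n}/p)·(p/ℓ)`. -/
noncomputable def locDchar (l : ℕ) (D : ℤ) (f p : ℕ) : ℚ :=
  (ArithmeticFunction.sigma 1 (ppart f p) : ℚ) -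
    (ArithmeticFunction.sigma 1 (ppart f p / p) : ℚ) * (kron D p : ℚ) *
      (jacobiSym (p : ℤ) l : ℚ)

/-- The Pei–Wang generalized class number `H(ℓ, m, N; n)` with character `χ_ℓ`. -/
noncomputable def HPWchar (l m N n : ℕ) : ℚ := by
  classical
  exact
    if n = 0 then
      if m = N then -(1 / 12) * ∏ p ∈ N.primeFactors, (1 - (p : ℚ)) else 0
    else if (∃ q : ℤ × ℕ, IsFundDisc q.1 ∧ 1 ≤ q.2 ∧
            -(((-1 : ℤ) ^ ((l - 1) / 2)) * (n : ℤ)) = q.1 * (q.2 : ℤ) ^ 2) ∧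
        (∃ q : ℤ × ℕ, IsFundDisc q.1 ∧ 1 ≤ q.2 ∧
            -((l : ℤ) * (n : ℤ)) = q.1 * (q.2 : ℤ) ^ 2) then
      LvalM m (fdpair (-((l : ℤ) * (n : ℤ)))).1 *
        (∏ p ∈ (N / m).primeFactors,
          (1 - (kron (fdpair (-((l : ℤ) * (n : ℤ)))).1 p : ℚ) / (p : ℚ)) /
            (1 - ((p : ℚ)⁻¹) ^ 2)) *
        ((Int.gcd (l : ℤ) (fdpair (-(((-1 : ℤ) ^ ((l - 1) / 2)) * (n : ℤ)))).1 : ℚ) /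
          (Nat.gcd (Int.gcd (l : ℤ) (fdpair (-(((-1 : ℤ) ^ ((l - 1) / 2)) * (n : ℤ)))).1) m : ℚ)) *
        ∑ a ∈ (fdpair (-(((-1 : ℤ) ^ ((l - 1) / 2)) * (n : ℤ)))).2.divisors,
          if Nat.gcd a N = 1 then
            (ArithmeticFunction.moebius a : ℚ) *
              (kron (fdpair (-(((-1 : ℤ) ^ ((l - 1) / 2)) * (n : ℤ)))).1 a : ℚ) *
              (jacobiSym (a : ℤ) l : ℚ) *
              (sigmaMN m N ((fdpair (-(((-1 : ℤ) ^ ((l - 1) / 2)) * (n : ℤ)))).2 / a) : ℚ)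
          else 0
    else 0

/-!
The sum is the Dirichlet convolution, evaluated at `f`, of the multiplicative function
`d ↦ [(d, N) = 1] μ(d) (d/ℓ) (D/d)` with `σ_{m,N,1}`, which is itself the convolution of
`d ↦ [(d, m) = 1] d` with `e ↦ [(e, N/m) = 1]`; so both sides factor over the primes of `f`.
At a prime power `p^k` the twisted Möbius factor lives only on `1` and `p`, and only on `1` if
`p ∣ N`. For `p ∤ N` this gives `σ₁(p^k) - (D/p)(p/ℓ) σ₁(p^(k-1))`. For `p ∣ N`, squarefreeness
of `N` makes `m` and `N/m` coprime, so `σ_{m,N,1}(p^k)` is `p^k` or `1` according as `p` divides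
`N/m` or `m`.
-/

open scoped ArithmeticFunction.Moebius ArithmeticFunction.sigma ArithmeticFunction.zeta

theorem kron_one (D : ℤ) : kron D 1 = 1 := by simp [kron]

theorem kron_mul (D : ℤ) {a b : ℕ} (ha : a ≠ 0) (hb : b ≠ 0) :
    kron D (a * b) = kron D a * kron D b := by
  rw [kron, Nat.factorization_mul ha hb]
  exact Finsupp.prod_add_index' (fun _ => pow_zero _) (fun _ _ _ => pow_add _ _ _)

namespace ArithmeticFunction

variable {R : Type*}

def restrictCoprime [Zero R] (k : ℕ) (f : ArithmeticFunction R) : ArithmeticFunction R :=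
  ⟨fun n => if n.Coprime k then f n else 0, by simp⟩

@[simp]
theorem restrictCoprime_apply [Zero R] (k : ℕ) (f : ArithmeticFunction R) (n : ℕ) :
    restrictCoprime k f n = if n.Coprime k then f n else 0 :=
  rfl

theorem restrictCoprime_apply_prime_pow [Zero R] (k : ℕ) (f : ArithmeticFunction R) {p : ℕ}
    (hp : p.Prime) (i : ℕ) :
    restrictCoprime k f (p ^ i) = if p ∣ k ∧ i ≠ 0 then 0 else f (p ^ i) := by
  rcases eq_or_ne i 0 with rfl | hi
  · simp
  · by_cases hpk : p ∣ k <;>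
      simp [Nat.coprime_pow_left_iff (Nat.pos_of_ne_zero hi), hp.coprime_iff_not_dvd, hi, hpk]

theorem IsMultiplicative.restrictCoprime [MonoidWithZero R] {f : ArithmeticFunction R}
    (hf : f.IsMultiplicative) (k : ℕ) : (restrictCoprime k f).IsMultiplicative := by
  refine ⟨by simp [hf.map_one], fun {a b} hab => ?_⟩
  simp only [restrictCoprime_apply, Nat.coprime_mul_iff_left, hf.map_mul_of_coprime hab]
  split_ifs <;> simp_all

theorem restrictCoprime_mul_restrictCoprime_apply [Semiring R] {f g : ArithmeticFunction R}
    {a b n : ℕ} (ha : n.Coprime a) (hb : n.Coprime b) :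
    (restrictCoprime a f * restrictCoprime b g) n = (f * g) n := by
  simp only [mul_apply]
  refine Finset.sum_congr rfl fun x hx => ?_
  obtain ⟨hx, -⟩ := Nat.mem_divisorsAntidiagonal.mp hx
  rw [restrictCoprime_apply, restrictCoprime_apply,
    if_pos (ha.coprime_dvd_left (Dvd.intro _ hx)),
    if_pos (hb.coprime_dvd_left (Dvd.intro_left _ hx))]

theorem mul_apply_eq_sum_divisors [Semiring R] (f g : ArithmeticFunction R) (n : ℕ) :
    (f * g) n = ∑ d ∈ n.divisors, f d * g (n / d) :=
  Nat.sum_divisorsAntidiagonal fun x y => f x * g y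

theorem mul_apply_prime_pow_succ_of_apply_prime_pow_eq_zero [Semiring R]
    {g h : ArithmeticFunction R} {p : ℕ} (hp : p.Prime) (hg : ∀ i, 2 ≤ i → g (p ^ i) = 0)
    (k : ℕ) : (g * h) (p ^ (k + 1)) = g 1 * h (p ^ (k + 1)) + g p * h (p ^ k) := by
  rw [mul_apply_eq_sum_divisors,
    Nat.sum_divisors_prime_pow hp, Finset.sum_range_succ', Finset.sum_range_succ',
    Finset.sum_eq_zero fun i _ => by rw [hg (i + 1 + 1) (by omega), zero_mul],
    Nat.pow_div (by omega) hp.pos]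
  simp [add_comm]

def sigmaCoprime (a b : ℕ) : ArithmeticFunction ℕ :=
  restrictCoprime a .id * restrictCoprime b ζ

theorem isMultiplicative_sigmaCoprime (a b : ℕ) : (sigmaCoprime a b).IsMultiplicative :=
  (isMultiplicative_id.restrictCoprime a).mul (isMultiplicative_zeta.restrictCoprime b)

section PrimePow

variable {a b p : ℕ} (hp : p.Prime) (k : ℕ)
include hp

theorem sigmaCoprime_apply_prime_pow_of_not_dvd (ha : ¬p ∣ a) (hb : ¬p ∣ b) :
    sigmaCoprime a b (p ^ k) = σ 1 (p ^ k) := by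
  rw [sigmaCoprime, restrictCoprime_mul_restrictCoprime_apply
    ((hp.coprime_iff_not_dvd.2 ha).pow_left k) ((hp.coprime_iff_not_dvd.2 hb).pow_left k),
    ← pow_one_eq_id, mul_comm, zeta_mul_pow_eq_sigma]

theorem sigmaCoprime_apply_prime_pow_of_dvd_left (ha : p ∣ a) (hb : ¬p ∣ b) :
    sigmaCoprime a b (p ^ k) = 1 := by
  rw [sigmaCoprime, mul_apply_eq_sum_divisors,
    Nat.sum_divisors_prime_pow hp, Finset.sum_eq_single 0]
  · simp [restrictCoprime_apply_prime_pow _ _ hp, hb, hp.ne_zero]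
  · intro i _ hi
    simp [restrictCoprime_apply_prime_pow _ _ hp, ha, hi]
  · simp

theorem sigmaCoprime_apply_prime_pow_of_dvd_right (ha : ¬p ∣ a) (hb : p ∣ b) :
    sigmaCoprime a b (p ^ k) = p ^ k := by
  rw [sigmaCoprime, mul_apply_eq_sum_divisors,
    Nat.sum_divisors_prime_pow hp, Finset.sum_eq_single k]
  · simp [restrictCoprime_apply_prime_pow _ _ hp, ha, hp.pos]
  · intro i hi hik
    have hik : i < k := by have := Finset.mem_range.1 hi; omega
    simp [restrictCoprime_apply_prime_pow _ _ hp, hb, Nat.pow_div hik.le hp.pos,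
      Nat.sub_ne_zero_of_lt hik]
  · simp

end PrimePow

end ArithmeticFunction

open ArithmeticFunction

theorem sigmaMN_eq_sigmaCoprime (m N r : ℕ) : sigmaMN m N r = sigmaCoprime m (N / m) r := by
  rw [sigmaMN, sigmaCoprime, mul_apply_eq_sum_divisors]
  refine Finset.sum_congr rfl fun d hd => ?_
  have hrd : r / d ≠ 0 := (Nat.div_pos (Nat.divisor_le hd) (Nat.pos_of_mem_divisors hd)).ne'
  rw [restrictCoprime_apply, restrictCoprime_apply, id_apply, zeta_apply, if_neg hrd,
    ite_zero_mul_ite_zero, mul_one]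

def moebiusTwist (l : ℕ) (D : ℤ) : ArithmeticFunction ℚ :=
  ⟨fun d => μ d * jacobiSym d l * kron D d, by simp⟩

theorem isMultiplicative_moebiusTwist (l : ℕ) (D : ℤ) : (moebiusTwist l D).IsMultiplicative := by
  refine ⟨by simp [moebiusTwist, kron_one], fun {a b} hab => ?_⟩
  rcases eq_or_ne a 0 with rfl | ha
  · simp [moebiusTwist]
  rcases eq_or_ne b 0 with rfl | hb
  · simp [moebiusTwist]
  simp only [moebiusTwist, coe_mk, isMultiplicative_moebius.map_mul_of_coprime hab, Nat.cast_mul,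
    jacobiSym.mul_left, kron_mul D ha hb]
  push_cast
  ring

theorem moebiusTwist_apply_prime (l : ℕ) (D : ℤ) {p : ℕ} (hp : p.Prime) :
    moebiusTwist l D p = -(jacobiSym p l * kron D p) := by
  simp [moebiusTwist, moebius_apply_prime hp]

theorem moebiusTwist_apply_prime_pow_of_two_le (l : ℕ) (D : ℤ) {p i : ℕ} (hp : p.Prime)
    (hi : 2 ≤ i) : moebiusTwist l D (p ^ i) = 0 := by
  rw [moebiusTwist, coe_mk, moebius_apply_prime_pow hp (by omega), if_neg (by omega)]
  simp

def twistedSigma (N l m : ℕ) (D : ℤ) : ArithmeticFunction ℚ :=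
  restrictCoprime N (moebiusTwist l D) * ↑(sigmaCoprime m (N / m))

theorem isMultiplicative_twistedSigma (N l m : ℕ) (D : ℤ) :
    (twistedSigma N l m D).IsMultiplicative :=
  ((isMultiplicative_moebiusTwist l D).restrictCoprime N).mul
    (isMultiplicative_sigmaCoprime m (N / m)).natCast

theorem twistedSigma_apply (N l m : ℕ) (D : ℤ) (f : ℕ) :
    twistedSigma N l m D f =
      ∑ d ∈ f.divisors,
        if Nat.gcd d N = 1 then
          (μ d : ℚ) * (jacobiSym (d : ℤ) l : ℚ) * (kron D d : ℚ) * (sigmaMN m N (f / d) : ℚ)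
        else 0 := by
  rw [twistedSigma, mul_apply_eq_sum_divisors]
  refine Finset.sum_congr rfl fun d _ => ?_
  rw [restrictCoprime_apply, natCoe_apply, sigmaMN_eq_sigmaCoprime, ite_mul, zero_mul]
  rfl

section PrimePow

variable {N m p : ℕ} (l : ℕ) (D : ℤ) (hm : m ∣ N) (hp : p.Prime) (k : ℕ)
include hm hp

theorem twistedSigma_apply_prime_pow_of_not_dvd (hpN : ¬p ∣ N) :
    twistedSigma N l m D (p ^ k) =
      σ 1 (p ^ k) - σ 1 (p ^ k / p) * kron D p * jacobiSym p l := by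
  have hpm : ¬p ∣ m := fun h => hpN (h.trans hm)
  have hpNm : ¬p ∣ N / m := fun h => hpN (h.trans (Nat.div_dvd_of_dvd hm))
  cases k with
  | zero => simp [(isMultiplicative_twistedSigma N l m D).map_one, Nat.div_eq_of_lt hp.one_lt]
  | succ k =>
    rw [twistedSigma, mul_apply_prime_pow_succ_of_apply_prime_pow_eq_zero hp
      (fun i hi => by simp [moebiusTwist_apply_prime_pow_of_two_le l D hp hi]),
      natCoe_apply, natCoe_apply, sigmaCoprime_apply_prime_pow_of_not_dvd hp _ hpm hpNm,
      sigmaCoprime_apply_prime_pow_of_not_dvd hp _ hpm hpNm,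
      ((isMultiplicative_moebiusTwist l D).restrictCoprime N).map_one, restrictCoprime_apply,
      if_pos (hp.coprime_iff_not_dvd.2 hpN), moebiusTwist_apply_prime l D hp, pow_succ,
      Nat.mul_div_cancel _ hp.pos]
    ring

theorem twistedSigma_apply_prime_pow_of_dvd (hsf : Squarefree N) (hpN : p ∣ N) :
    twistedSigma N l m D (p ^ k) = if p ∣ N / m then (p : ℚ) ^ k else 1 := by
  have hsigma : twistedSigma N l m D (p ^ k) = sigmaCoprime m (N / m) (p ^ k) := by
    cases k with
    | zero =>
      simp [(isMultiplicative_twistedSigma N l m D).map_one,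
        (isMultiplicative_sigmaCoprime m (N / m)).map_one]
    | succ k =>
      rw [twistedSigma, mul_apply_prime_pow_succ_of_apply_prime_pow_eq_zero hp
        (fun i hi => by simp [moebiusTwist_apply_prime_pow_of_two_le l D hp hi]),
        ((isMultiplicative_moebiusTwist l D).restrictCoprime N).map_one, restrictCoprime_apply,
        if_neg (hp.coprime_iff_not_dvd.not_left.2 hpN), zero_mul, add_zero, one_mul, natCoe_apply]
  have hcop : m.Coprime (N / m) := Nat.coprime_of_squarefree_mul (by rwa [Nat.mul_div_cancel' hm])
  split_ifs with hpNm
  · have hpm : ¬p ∣ m := fun hpm => hp.not_dvd_one (hcop.gcd_eq_one ▸ Nat.dvd_gcd hpm hpNm)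
    rw [hsigma, sigmaCoprime_apply_prime_pow_of_dvd_right hp k hpm hpNm, Nat.cast_pow]
  · have hpm : p ∣ m := (hp.dvd_mul.1 (by rwa [Nat.mul_div_cancel' hm])).resolve_right hpNm
    rw [hsigma, sigmaCoprime_apply_prime_pow_of_dvd_left hp k hpm hpNm, Nat.cast_one]

end PrimePow

theorem prod_primeFactors_dvd_twistedSigma {N m f : ℕ} (l : ℕ) (D : ℤ) (hsf : Squarefree N)
    (hm : m ∣ N) :
    ∏ p ∈ f.primeFactors with p ∣ N, twistedSigma N l m D (p ^ f.factorization p) =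
      ∏ p ∈ (N / m).primeFactors, (ppart f p : ℚ) := by
  have hNm : N / m ∣ N := Nat.div_dvd_of_dvd hm
  calc _ = ∏ p ∈ f.primeFactors with p ∣ N, if p ∣ N / m then (ppart f p : ℚ) else 1 :=
        Finset.prod_congr rfl fun p hp => by
          rw [twistedSigma_apply_prime_pow_of_dvd l D hm
            (Nat.prime_of_mem_primeFactors (Finset.mem_filter.1 hp).1) _ hsf
            (Finset.mem_filter.1 hp).2, ppart, Nat.cast_pow]
    _ = ∏ p ∈ f.primeFactors with p ∣ N / m, (ppart f p : ℚ) := by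
        rw [Finset.prod_ite, Finset.prod_const_one, mul_one, Finset.filter_filter]
        exact Finset.prod_congr
          (Finset.filter_congr fun p _ => ⟨And.right, fun h => ⟨h.trans hNm, h⟩⟩) fun _ _ => rfl
    _ = ∏ p ∈ (N / m).primeFactors, (ppart f p : ℚ) := by
        refine Finset.prod_subset (fun p hp => ?_) fun p hp hpf => ?_
        · obtain ⟨hpf, hpNm⟩ := Finset.mem_filter.1 hp
          exact Nat.mem_primeFactors.2
            ⟨Nat.prime_of_mem_primeFactors hpf, hpNm, ne_zero_of_dvd_ne_zero hsf.ne_zero hNm⟩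
        · have hpf : p ∉ f.factorization.support := fun h => hpf (Finset.mem_filter.2
            ⟨Nat.support_factorization f ▸ h, Nat.dvd_of_mem_primeFactors hp⟩)
          rw [ppart, Finsupp.notMem_support_iff.1 hpf, pow_zero, Nat.cast_one]

theorem moebius_sum_local_char_general (N l m : ℕ) (hsf : Squarefree N) (hm : m ∣ N) (D : ℤ) (f : ℕ)
    (hf : 1 ≤ f) :
    (∑ d ∈ f.divisors,
        if Nat.gcd d N = 1 then
          (ArithmeticFunction.moebius d : ℚ) * (jacobiSym (d : ℤ) l : ℚ) *
            (kron D d : ℚ) * (sigmaMN m N (f / d) : ℚ)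
        else 0) =
      (∏ p ∈ (N / m).primeFactors, (ppart f p : ℚ)) *
        ∏ p ∈ f.primeFactors.filter fun p => ¬p ∣ N, locDchar l D f p := by
  rw [← twistedSigma_apply,
    (isMultiplicative_twistedSigma N l m D).multiplicative_factorization _ (by omega),
    Finsupp.prod, Nat.support_factorization, ← Finset.prod_filter_mul_prod_filter_not _ (· ∣ N),
    prod_primeFactors_dvd_twistedSigma l D hsf hm]
  congr 1
  refine Finset.prod_congr rfl fun p hp => ?_
  obtain ⟨hpf, hpN⟩ := Finset.mem_filter.1 hp
  exact twistedSigma_apply_prime_pow_of_not_dvd l D hm (Nat.prime_of_mem_primeFactors hpf) _ hpN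

/-- Twisted Möbius–Kronecker divisor sum in terms of local parts. -/
theorem moebius_sum_local_char (N l m : ℕ) (hN : 0 < N) (hodd : Odd N)
    (hsf : Squarefree N) (hl : l ∣ N) (hl1 : 1 < l) (hm : m ∣ N) (n : ℕ) (hn : 0 < n)
    (D : ℤ) (f : ℕ) (hD : IsFundDisc D) (hf : 1 ≤ f)
    (hDf : -(((-1 : ℤ) ^ ((l - 1) / 2)) * (n : ℤ)) = D * (f : ℤ) ^ 2) :
    (∑ d ∈ f.divisors,
        if Nat.gcd d N = 1 then
          (ArithmeticFunction.moebius d : ℚ) * (jacobiSym (d : ℤ) l : ℚ) *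
            (kron D d : ℚ) * (sigmaMN m N (f / d) : ℚ)
        else 0) =
      (∏ p ∈ (N / m).primeFactors, (ppart f p : ℚ)) *
        ∏ p ∈ f.primeFactors.filter fun p => ¬p ∣ N, locDchar l D f p :=
  moebius_sum_local_char_general N l m hsf hm D f hf
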